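/- Let p = (1−δ)/2 and q = (1+δ)/2 with 0 < δ < 1. Then for all real a ≥ b > 0, q·a^{−log₂ q} + p·b^{−log₂ q} ≥ q·(a+b)^{−log₂ q}. -/

import Mathlib

/-!
Since `α = -log₂ q` lies in `(0, 1]`, the map `x ↦ x ^ α` is concave on `[0, ∞)`, so its
increments over intervals of length `b` decrease: `(a + b) ^ α - a ^ α ≤ (2b) ^ α - b ^ α`
for `a ≥ b`. The choice of `α` makes `q · 2 ^ α = 1`, so `q ((2b) ^ α - b ^ α) = (1 - q) b ^ α`.
-/

open Real Set

theorem ConcaveOn.add_sub_le_add_sub_of_le {𝕜 : Type*} [Field 𝕜] [LinearOrder 𝕜]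
    [IsStrictOrderedRing 𝕜] {s : Set 𝕜} {f : 𝕜 → 𝕜} (hf : ConcaveOn 𝕜 s f) {x y h : 𝕜}
    (hx : x ∈ s) (hyh : y + h ∈ s) (hxy : x ≤ y) (hh : 0 ≤ h) :
    f (y + h) - f y ≤ f (x + h) - f x := by
  rcases (add_nonneg (sub_nonneg.2 hxy) hh).eq_or_lt with hzero | hpos
  · obtain rfl : x = y := by linarith
    obtain rfl : h = 0 := by linarith
    rfl
  -- `x + h` and `y` are the convex combinations of `x` and `y + h` with swapped weights.
  set t := h / (y - x + h)
  have ht0 : 0 ≤ t := div_nonneg hh hpos.le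
  have ht1 : 0 ≤ 1 - t := by
    rw [sub_nonneg, div_le_one hpos]; linarith
  have hxh := hf.2 hx hyh ht1 ht0 (by ring)
  have hy := hf.2 hx hyh ht0 ht1 (by ring)
  have hxh_eq : (1 - t) • x + t • (y + h) = x + h := by
    simp only [smul_eq_mul, t]; field_simp; ring
  have hy_eq : t • x + (1 - t) • (y + h) = y := by
    simp only [smul_eq_mul, t]; field_simp; ring
  rw [hxh_eq] at hxh
  rw [hy_eq] at hy
  simp only [smul_eq_mul] at hxh hy
  linarith

theorem Real.rpow_add_sub_rpow_le {α : ℝ} (hα0 : 0 ≤ α) (hα1 : α ≤ 1) {a b : ℝ}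
    (hb : 0 ≤ b) (hab : b ≤ a) :
    (a + b) ^ α - a ^ α ≤ (2 ^ α - 1) * b ^ α := by
  have h := (concaveOn_rpow hα0 hα1).add_sub_le_add_sub_of_le (mem_Ici.2 hb)
    (mem_Ici.2 (by linarith)) hab hb
  rwa [← two_mul, mul_rpow zero_le_two hb, ← sub_one_mul] at h

theorem Real.mul_rpow_neg_logb_self {q : ℝ} (hq : 0 < q) : q * 2 ^ (-logb 2 q) = 1 := by
  rw [rpow_neg zero_le_two, rpow_logb zero_lt_two (by norm_num) hq, mul_inv_cancel₀ hq.ne']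

theorem Real.neg_logb_two_mem_Icc {q : ℝ} (hq_half : 2⁻¹ ≤ q) (hq1 : q ≤ 1) :
    -logb 2 q ∈ Icc 0 1 := by
  have h := logb_le_logb_of_le one_lt_two (by norm_num) hq_half
  rw [logb_inv, logb_self_eq_one one_lt_two] at h
  exact ⟨neg_nonneg.2 (logb_nonpos one_lt_two (by linarith) hq1), by linarith⟩

theorem sv_key_inequality (δ : ℝ) (hδ0 : 0 < δ) (hδ1 : δ < 1)
    (a b : ℝ) (hb : 0 < b) (hab : b ≤ a) :
    ((1 + δ) / 2) * (a + b) ^ (-(Real.logb 2 ((1 + δ) / 2)))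
      ≤ ((1 + δ) / 2) * a ^ (-(Real.logb 2 ((1 + δ) / 2)))
        + ((1 - δ) / 2) * b ^ (-(Real.logb 2 ((1 + δ) / 2))) := by
  set q := (1 + δ) / 2
  obtain ⟨hα0, hα1⟩ := neg_logb_two_mem_Icc (q := q) (by simp only [q]; linarith)
    (by simp only [q]; linarith)
  have hinc := rpow_add_sub_rpow_le hα0 hα1 hb.le hab
  have hq2 := mul_rpow_neg_logb_self (show 0 < q by positivity)
  calc q * (a + b) ^ (-logb 2 q)
      ≤ q * (a ^ (-logb 2 q) + (2 ^ (-logb 2 q) - 1) * b ^ (-logb 2 q)) := by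
        gcongr; linarith
    _ = q * a ^ (-logb 2 q) + (1 - δ) / 2 * b ^ (-logb 2 q) := by
        linear_combination b ^ (-logb 2 q) * hq2
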